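/- Let p be an odd prime and d ≥ 1 an integer. In 𝔽_p[t][H], let g = ∏_{k=0}^{d}(H − k·t)² and let f = (H^p − t^{p−1}·H)·∏_{k=1}^{d−1}(H − k·t)². Let Rem be the remainder of f upon division by g. Then the coefficient of H^{2d+1} in Rem equals −2·d^{p−3}·t^{p−3} in 𝔽_p[t] (where d^{p−3} is computed in 𝔽_p; in particular this coefficient is 0 when p divides d). -/

import Mathlib

/-!
Write `c = d·t` and `P = ∏_{k=1}^{d-1}(H - kt)²`, so that `g = H²(H - c)²P` and, with `n = p - 3`,
`f = (H^{n+3} - t^{p-1}H)·P`. Since `(H - c)²` divides `H^{n+1}` minus its tangent line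
`(n+1)c^n·H - n·c^{n+1}` at `c`, the polynomial
`P·((n+1)c^n·H³ - n·c^{n+1}·H² - t^{p-1}H)` is congruent to `f` modulo `g`, and it has degree
`deg P + 3 < deg g`, so it is the remainder. Its coefficient of `H^{deg P + 3} = H^{2d+1}` is
`(n+1)c^n = (p-2)·d^{p-3}t^{p-3} = -2·d^{p-3}t^{p-3}` in characteristic `p`.
-/

open Polynomial Finset

namespace Polynomial

variable {R : Type*} [CommRing R]

theorem sq_X_sub_C_dvd_X_pow_sub_tangent (c : R) (n : ℕ) :
    (X - C c) ^ 2 ∣ X ^ (n + 1) - C ((n + 1) * c ^ n) * X + C (n * c ^ (n + 1)) := by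
  induction n with
  | zero => simp
  | succ n ih =>
    have hsucc : X ^ (n + 1 + 1) - C ((↑(n + 1) + 1) * c ^ (n + 1)) * X
          + C (↑(n + 1) * c ^ (n + 1 + 1))
        = X * (X ^ (n + 1) - C ((n + 1) * c ^ n) * X + C (n * c ^ (n + 1)))
          + C ((n + 1) * c ^ n) * (X - C c) ^ 2 := by
      simp only [map_mul, map_add, map_natCast, map_pow, map_one, Nat.cast_add, Nat.cast_one]
      ring
    rw [hsucc]
    exact dvd_add (dvd_mul_of_dvd_right ih _) (dvd_mul_left _ _)

theorem X_pow_sub_C_mul_X_mul_modByMonic [Nontrivial R] {P : R[X]} (hP : P.Monic) (a c : R)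
    (n : ℕ) :
    ((X ^ (n + 3) - C a * X) * P) %ₘ (X ^ 2 * (X - C c) ^ 2 * P)
      = P * (C ((n + 1) * c ^ n) * X ^ 3 - C (n * c ^ (n + 1)) * X ^ 2 - C a * X) := by
  have hquartic_monic : (X ^ 2 * (X - C c) ^ 2 : R[X]).Monic :=
    (monic_X_pow 2).mul ((monic_X_sub_C c).pow 2)
  have hg : (X ^ 2 * (X - C c) ^ 2 * P).Monic := hquartic_monic.mul hP
  rw [modByMonic_eq_of_dvd_sub hg, (modByMonic_eq_self_iff hg).mpr]
  · refine degree_lt_degree (natDegree_mul_le.trans_lt ?_)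
    have hquartic : (X ^ 2 * (X - C c) ^ 2 : R[X]).natDegree = 4 := by
      rw [(monic_X_pow 2).natDegree_mul ((monic_X_sub_C c).pow 2), natDegree_X_pow,
        (monic_X_sub_C c).natDegree_pow, natDegree_X_sub_C]
    have hcubic : (C ((n + 1) * c ^ n) * X ^ 3 - C (n * c ^ (n + 1)) * X ^ 2 - C a * X).natDegree
        ≤ 3 := by
      compute_degree
    rw [hquartic_monic.natDegree_mul hP, hquartic]
    omega
  · have key : (X ^ (n + 3) - C a * X) * P
        - P * (C ((n + 1) * c ^ n) * X ^ 3 - C (n * c ^ (n + 1)) * X ^ 2 - C a * X)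
        = X ^ 2 * P * (X ^ (n + 1) - C ((n + 1) * c ^ n) * X + C (n * c ^ (n + 1))) := by
      ring
    rw [key, mul_right_comm]
    exact mul_dvd_mul_left _ (sq_X_sub_C_dvd_X_pow_sub_tangent c n)

theorem Monic.coeff_mul_cubic_natDegree_add_three {P : R[X]} (hP : P.Monic) (α β γ : R) :
    (P * (C α * X ^ 3 - C β * X ^ 2 - C γ * X)).coeff (P.natDegree + 3) = α := by
  have hlow : (P * (C β * X ^ 2 + C γ * X)).coeff (P.natDegree + 3) = 0 := by
    refine coeff_eq_zero_of_natDegree_lt (natDegree_mul_le.trans_lt ?_)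
    have : (C β * X ^ 2 + C γ * X).natDegree ≤ 2 := by compute_degree
    omega
  rw [show P * (C α * X ^ 3 - C β * X ^ 2 - C γ * X)
      = C α * (P * X ^ 3) - P * (C β * X ^ 2 + C γ * X) by ring,
    coeff_sub, coeff_C_mul, coeff_mul_X_pow, hP.coeff_natDegree, hlow, mul_one, sub_zero]

theorem coeff_X_pow_sub_C_mul_X_mul_modByMonic [Nontrivial R] {P : R[X]} (hP : P.Monic)
    (a c : R) (n : ℕ) :
    (((X ^ (n + 3) - C a * X) * P) %ₘ (X ^ 2 * (X - C c) ^ 2 * P)).coeff (P.natDegree + 3)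
      = (n + 1) * c ^ n := by
  rw [X_pow_sub_C_mul_X_mul_modByMonic hP, hP.coeff_mul_cubic_natDegree_add_three]

theorem natDegree_prod_X_sub_C_sq [Nontrivial R] {ι : Type*} (s : Finset ι) (a : ι → R) :
    (∏ i ∈ s, (X - C (a i)) ^ 2).natDegree = 2 * #s := by
  rw [natDegree_prod_of_monic _ _ fun i _ => (monic_X_sub_C (a i)).pow 2]
  simp [(monic_X_sub_C _).natDegree_pow, mul_comm]

end Polynomial

theorem Finset.prod_range_succ_eq_mul_prod_Icc {M : Type*} [CommMonoid M] (f : ℕ → M) {d : ℕ}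
    (hd : 1 ≤ d) :
    ∏ k ∈ range (d + 1), f k = f 0 * f d * ∏ k ∈ Icc 1 (d - 1), f k := by
  obtain ⟨e, rfl⟩ := Nat.exists_eq_add_of_le' hd
  rw [prod_range_succ, prod_range_succ', Nat.add_sub_cancel, ← Ico_add_one_right_eq_Icc,
    prod_Ico_eq_prod_range, Nat.add_sub_cancel]
  simp only [add_comm 1]
  exact mul_rotate _ _ _

/-- In `𝔽_p[t][H]` with `g = ∏_{k=0}^{d}(H-kt)²` and
`f = (H^p - t^{p-1}H)·∏_{k=1}^{d-1}(H-kt)²`, the coefficient of `H^{2d+1}` in the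
remainder of `f` modulo `g` equals `-2·d^{p-3}·t^{p-3}`. -/
theorem qst_structure_constant_11 (p : ℕ) (hp : p.Prime) (hodd : p ≠ 2) (d : ℕ) (hd : 1 ≤ d) :
    (((Polynomial.X ^ p
          - Polynomial.C ((Polynomial.X : Polynomial (ZMod p)) ^ (p - 1)) * Polynomial.X)
        * ∏ k ∈ Finset.Icc 1 (d - 1),
            (Polynomial.X - Polynomial.C ((k : ZMod p) • (Polynomial.X : Polynomial (ZMod p)))) ^ 2)
      %ₘ (∏ k ∈ Finset.range (d + 1),
            (Polynomial.X - Polynomial.C ((k : ZMod p) • (Polynomial.X : Polynomial (ZMod p)))) ^ 2)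
      : Polynomial (Polynomial (ZMod p))).coeff (2 * d + 1)
      = Polynomial.C (-2 * (d : ZMod p) ^ (p - 3)) * (Polynomial.X : Polynomial (ZMod p)) ^ (p - 3) := by
  have : Fact p.Prime := ⟨hp⟩
  have hp3 : p - 3 + 3 = p := by have := hp.two_le; omega
  have hXp : (X : (ZMod p)[X][X]) ^ p = X ^ (p - 3 + 3) := by rw [hp3]
  set P : (ZMod p)[X][X] := ∏ k ∈ Icc 1 (d - 1), (X - C ((k : ZMod p) • X)) ^ 2
  have hg : ∏ k ∈ range (d + 1), (X - C ((k : ZMod p) • X)) ^ 2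
      = X ^ 2 * (X - C ((d : ZMod p) • X)) ^ 2 * P := by
    rw [prod_range_succ_eq_mul_prod_Icc _ hd, Nat.cast_zero, zero_smul, map_zero, sub_zero]
  have hdeg : 2 * d + 1 = P.natDegree + 3 := by
    rw [natDegree_prod_X_sub_C_sq, Nat.card_Icc]
    omega
  have hcast : ((p - 3 : ℕ) : ZMod p) + 1 = -2 := by
    have h : ((p - 3 + 3 : ℕ) : ZMod p) = 0 := by rw [hp3, ZMod.natCast_self]
    push_cast at h
    linear_combination h
  rw [hg, hXp, hdeg, coeff_X_pow_sub_C_mul_X_mul_modByMonic (monic_prod_of_monic _ _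
    fun k _ => (monic_X_sub_C _).pow 2),
    smul_eq_C_mul, mul_pow, ← C_pow, ← map_natCast C, ← C_1, ← C_add, hcast, C_mul, mul_assoc]
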